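/- arXiv:0809.2258 — 2 statements merged into one kernel-verified Lean document; each statement's English description precedes it below -/
import Mathlib

section
/- Let 0<p<1 and q=1−p. In a random graph order on the positive integers ℕ with parameter p, for every n≥1 the probability that n is related to every later element (i.e., n ≺_ω m for all m>n) equals κ(q)=∏_{j=1}^∞(1−q^j). -/
open MeasureTheory ProbabilityTheory

/-- The index set of potential edges of a random graph order on `ℕ = {1, 2, 3, …}`:
pairs `(i, j)` with `1 ≤ i < j`. -/
abbrev GraphOrderEdge : Type := {ij : ℕ × ℕ // 1 ≤ ij.1 ∧ ij.1 < ij.2}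

/-- The random graph order relation `≺_ω`: the transitive closure of the relation
`{(i, j) : 1 ≤ i < j and ω(i, j) = 1}`. -/
def GraphOrderRel (ω : GraphOrderEdge → Bool) (a b : ℕ) : Prop :=
  Relation.TransGen (fun x y => ∃ h : 1 ≤ x ∧ x < y, ω ⟨(x, y), h⟩ = true) a b

/-- `μ` is the law of a random graph order on `ℕ = {1, 2, 3, …}` with parameter `p`:
a probability measure on edge configurations whose coordinates are independent
Bernoulli(`p`) random variables. -/
structure IsRandomGraphOrderMeasure (μ : Measure (GraphOrderEdge → Bool)) (p : ℝ)
    (hp : 0 < p ∧ p < 1) : Prop where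
  isProb : IsProbabilityMeasure μ
  indep : iIndepFun (fun e ω => ω e) μ
  bernoulli : ∀ e : GraphOrderEdge, μ.map (fun ω => ω e) =
    (PMF.bernoulli (Real.toNNReal p) (Real.toNNReal_le_one.mpr hp.2.le)).toMeasure

/-- Partial product of the Euler function: `λ_k(q) = ∏_{i=1}^k (1 - q^i)`, `λ_0(q) = 1`. -/
noncomputable def eulerLam (q : ℝ) (k : ℕ) : ℝ := ∏ i ∈ Finset.range k, (1 - q ^ (i + 1))

/-- The Euler function `κ(q) = ∏_{i=1}^∞ (1 - q^i)`. -/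
noncomputable def eulerKappa (q : ℝ) : ℝ := ∏' i : ℕ, (1 - q ^ (i + 1))

/-! A path from `n` to `m` ends with an edge `(j, m)` with `n ≤ j`; conversely, if every `m > n`
receives an edge from some `j ∈ [n, m)`, these edges chain into paths from `n` (strong induction
on `m`). So the event is the intersection over `k` of the events that `n + k + 1` receives an edge
from `[n, n + k]`. These events depend on pairwise disjoint blocks of `k + 1` independent
coordinates, hence are independent, and the `k`-th has probability `1 - q ^ (k + 1)`. Continuity
from above turns the partial products `λ_K(q)` into `κ(q)`. -/

open Filter Topology Function

namespace ProbabilityTheory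

variable {Ω ι : Type*} {mΩ : MeasurableSpace Ω} {μ : Measure Ω} {m : ι → MeasurableSpace Ω}
  {S : ℕ → Set ι} {E : ℕ → Set Ω}

theorem iIndep.measure_biInter_range_eq_prod_of_disjoint (h_le : ∀ i, m i ≤ mΩ)
    (h_indep : iIndep m μ) (hS : Pairwise (Disjoint on S))
    (hE : ∀ k, MeasurableSet[⨆ i ∈ S k, m i] (E k)) (K : ℕ) :
    μ (⋂ k ∈ Finset.range K, E k) = ∏ k ∈ Finset.range K, μ (E k) := by
  have := h_indep.isProbabilityMeasure
  induction K with
  | zero => simp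
  | succ K ih =>
    have h_block : Indep (⨆ i ∈ S K, m i) (⨆ i ∈ ⋃ k < K, S k, m i) μ :=
      indep_iSup_of_disjoint h_le h_indep
        (Set.disjoint_iUnion₂_right.2 fun k hk => hS (Nat.ne_of_gt hk))
    have h_prefix : MeasurableSet[⨆ i ∈ ⋃ k < K, S k, m i] (⋂ k ∈ Finset.range K, E k) :=
      Finset.measurableSet_biInter _ fun k hk =>
        (show ⨆ i ∈ S k, m i ≤ ⨆ i ∈ ⋃ k < K, S k, m i from
          biSup_mono fun i hi => Set.mem_iUnion₂_of_mem (Finset.mem_range.1 hk) hi) _ (hE k)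
    rw [Finset.range_add_one, Finset.set_biInter_insert,
      Finset.prod_insert Finset.notMem_range_self,
      (Indep_iff _ _ μ).1 h_block _ _ (hE K) h_prefix, ih]

theorem iIndep.tendsto_prod_measure_iInter_of_disjoint (h_le : ∀ i, m i ≤ mΩ)
    (h_indep : iIndep m μ) (hS : Pairwise (Disjoint on S))
    (hE : ∀ k, MeasurableSet[⨆ i ∈ S k, m i] (E k)) :
    Tendsto (fun K => ∏ k ∈ Finset.range K, μ (E k)) atTop (𝓝 (μ (⋂ k, E k))) := by
  have := h_indep.isProbabilityMeasure
  have hE_meas : ∀ k, MeasurableSet (E k) := fun k => iSup₂_le (fun i _ => h_le i) _ (hE k)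
  have h_iInter : ⋂ k, E k = ⋂ K, ⋂ k ∈ Finset.range K, E k := by
    ext ω
    simp only [Set.mem_iInter, Finset.mem_range]
    exact ⟨fun h K k _ => h k, fun h k => h (k + 1) k k.lt_succ_self⟩
  simp_rw [← h_indep.measure_biInter_range_eq_prod_of_disjoint h_le hS hE, h_iInter]
  exact tendsto_measure_iInter_atTop
    (fun K => (Finset.measurableSet_biInter _ fun k _ => hE_meas k).nullMeasurableSet)
    (fun a b hab => Set.biInter_subset_biInter_left (Finset.range_mono hab))
    ⟨0, measure_ne_top μ _⟩

end ProbabilityTheory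

theorem tendsto_eulerLam {q : ℝ} (hq : |q| < 1) :
    Tendsto (eulerLam q) atTop (𝓝 (eulerKappa q)) := by
  have h_sum : Summable fun i : ℕ => -q ^ (i + 1) :=
    ((summable_geometric_of_abs_lt_one hq).mul_left q).neg.congr fun i => by ring
  have := (Real.multipliable_one_add_of_summable h_sum).hasProd
  simp only [← sub_eq_add_neg] at this
  exact this.tendsto_prod_nat

def edgesInto (n m : ℕ) : Finset GraphOrderEdge :=
  (Finset.Ico n m ×ˢ {m}).subtype fun ij => 1 ≤ ij.1 ∧ ij.1 < ij.2

theorem mem_edgesInto {n m : ℕ} {e : GraphOrderEdge} :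
    e ∈ edgesInto n m ↔ n ≤ e.1.1 ∧ e.1.2 = m := by
  obtain ⟨⟨i, j⟩, hij⟩ := e
  simp only [edgesInto, Finset.mem_subtype, Finset.mem_product, Finset.mem_Ico,
    Finset.mem_singleton]
  omega

theorem card_edgesInto {n : ℕ} (hn : 1 ≤ n) (m : ℕ) : (edgesInto n m).card = m - n := by
  rw [edgesInto, Finset.card_subtype, Finset.filter_true_of_mem, Finset.card_product,
    Nat.card_Ico, Finset.card_singleton, mul_one]
  simp only [Finset.mem_product, Finset.mem_Ico, Finset.mem_singleton]
  omega

theorem disjoint_edgesInto {n n' m m' : ℕ} (hm : m ≠ m') :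
    Disjoint (edgesInto n m) (edgesInto n' m') :=
  Finset.disjoint_left.2 fun _ he he' =>
    hm <| (mem_edgesInto.1 he).2.symm.trans (mem_edgesInto.1 he').2

def existsEdgeInto (n m : ℕ) : Set (GraphOrderEdge → Bool) :=
  ⋃ e ∈ edgesInto n m, {ω | ω e = true}

theorem mem_existsEdgeInto {n m : ℕ} {ω : GraphOrderEdge → Bool} :
    ω ∈ existsEdgeInto n m ↔ ∃ e ∈ edgesInto n m, ω e = true := by
  simp [existsEdgeInto]

namespace GraphOrderRel

variable {ω : GraphOrderEdge → Bool} {a b : ℕ}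

theorem lt (h : GraphOrderRel ω a b) : a < b := by
  induction h with
  | single h => exact h.1.2
  | tail _ h ih => exact ih.trans h.1.2

theorem mem_existsEdgeInto (h : GraphOrderRel ω a b) : ω ∈ existsEdgeInto a b := by
  rw [_root_.mem_existsEdgeInto]
  cases h with
  | single h => exact ⟨⟨_, h.1⟩, mem_edgesInto.2 ⟨le_rfl, rfl⟩, h.2⟩
  | tail hac h => exact ⟨⟨_, h.1⟩, mem_edgesInto.2 ⟨(lt hac).le, rfl⟩, h.2⟩

end GraphOrderRel

theorem graphOrderRel_of_forall_mem_existsEdgeInto {ω : GraphOrderEdge → Bool} {n : ℕ}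
    (h : ∀ m, n < m → ω ∈ existsEdgeInto n m) (m : ℕ) (hm : n < m) : GraphOrderRel ω n m := by
  induction m using Nat.strong_induction_on with
  | _ m ih =>
    obtain ⟨⟨⟨j, m'⟩, hjm⟩, he, hω⟩ := mem_existsEdgeInto.1 (h m hm)
    obtain ⟨hnj, rfl : m' = m⟩ := mem_edgesInto.1 he
    rcases hnj.eq_or_lt with rfl | hnj
    · exact .single ⟨hjm, hω⟩
    · exact (ih j hjm.2 hnj).tail ⟨hjm, hω⟩

theorem setOf_forall_graphOrderRel_eq_iInter (n : ℕ) :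
    {ω | ∀ m, n < m → GraphOrderRel ω n m} = ⋂ k : ℕ, existsEdgeInto n (n + k + 1) := by
  ext ω
  simp only [Set.mem_ofPred_eq, Set.mem_iInter]
  refine ⟨fun h k => (h _ (by omega)).mem_existsEdgeInto,
    fun h => graphOrderRel_of_forall_mem_existsEdgeInto fun m hm => ?_⟩
  obtain ⟨k, rfl⟩ := Nat.exists_eq_add_of_lt hm
  exact h k

theorem measurableSet_existsEdgeInto (n m : ℕ) :
    MeasurableSet[⨆ e ∈ (edgesInto n m : Set GraphOrderEdge),
      MeasurableSpace.comap (fun ω : GraphOrderEdge → Bool => ω e) inferInstance]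
      (existsEdgeInto n m) :=
  Finset.measurableSet_biUnion _ fun e he =>
    le_iSup₂ (f := fun e (_ : e ∈ (edgesInto n m : Set GraphOrderEdge)) =>
      MeasurableSpace.comap (fun ω : GraphOrderEdge → Bool => ω e) inferInstance) e he _
      ⟨{true}, measurableSet_singleton _, rfl⟩

namespace IsRandomGraphOrderMeasure

variable {μ : Measure (GraphOrderEdge → Bool)} {p : ℝ} {hp : 0 < p ∧ p < 1}

theorem measure_eq_false (hμ : IsRandomGraphOrderMeasure μ p hp) (e : GraphOrderEdge) :
    μ {ω | ω e = false} = ENNReal.ofReal (1 - p) := by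
  change μ ((fun ω : GraphOrderEdge → Bool => ω e) ⁻¹' {false}) = _
  rw [← Measure.map_apply (measurable_pi_apply e) (measurableSet_singleton _), hμ.bernoulli e,
    PMF.toMeasure_apply_singleton _ _ (measurableSet_singleton _), PMF.bernoulli_apply,
    Bool.cond_false, ENNReal.coe_sub, ENNReal.coe_one, ENNReal.ofReal_sub _ hp.1.le,
    ENNReal.ofReal_one]
  rfl

theorem measure_compl_existsEdgeInto (hμ : IsRandomGraphOrderMeasure μ p hp) {n : ℕ}
    (hn : 1 ≤ n) (m : ℕ) : μ (existsEdgeInto n m)ᶜ = ENNReal.ofReal (1 - p) ^ (m - n) := by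
  have h_compl : (existsEdgeInto n m)ᶜ = ⋂ e ∈ edgesInto n m, {ω | ω e = false} := by
    simp only [existsEdgeInto, Set.compl_iUnion₂, Set.compl_ofPred, Bool.not_eq_true]
  rw [h_compl, hμ.indep.meas_biInter (s := fun e => {ω | ω e = false})
      fun e _ => ⟨{false}, measurableSet_singleton _, rfl⟩,
    Finset.prod_congr rfl fun e _ => hμ.measure_eq_false e, Finset.prod_const,
    card_edgesInto hn]

theorem measure_existsEdgeInto (hμ : IsRandomGraphOrderMeasure μ p hp) {n : ℕ}
    (hn : 1 ≤ n) (m : ℕ) : μ (existsEdgeInto n m) = ENNReal.ofReal (1 - (1 - p) ^ (m - n)) := by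
  have := hμ.isProb
  have h_meas : MeasurableSet (existsEdgeInto n m) :=
    Finset.measurableSet_biUnion _ fun e _ => measurable_pi_apply e (measurableSet_singleton _)
  rw [← compl_compl (existsEdgeInto n m), prob_compl_eq_one_sub h_meas.compl,
    measure_compl_existsEdgeInto hμ hn, ENNReal.ofReal_sub _ (pow_nonneg (by linarith [hp.2]) _),
    ENNReal.ofReal_one, ENNReal.ofReal_pow (by linarith [hp.2])]

end IsRandomGraphOrderMeasure

/-- In a random graph order on `ℕ = {1, 2, …}` with parameter `0 < p < 1` and `q = 1 - p`,
for every `n ≥ 1` the probability that `n` is related to every later element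
(i.e. `n ≺_ω m` for all `m > n`) equals `κ(q) = ∏_{j=1}^∞ (1 - q^j)`. -/
theorem prob_rel_all_above_eq (p q : ℝ) (hp : 0 < p ∧ p < 1) (hq : q = 1 - p)
    (μ : Measure (GraphOrderEdge → Bool)) (hμ : IsRandomGraphOrderMeasure μ p hp)
    (n : ℕ) (hn : 1 ≤ n) :
    μ {ω | ∀ m : ℕ, n < m → GraphOrderRel ω n m} = ENNReal.ofReal (eulerKappa q) := by
  subst hq
  have h_lim := hμ.indep.iIndep.tendsto_prod_measure_iInter_of_disjoint
    (fun e => (measurable_pi_apply e).comap_le)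
    (S := fun k => (edgesInto n (n + k + 1) : Set GraphOrderEdge))
    (fun k k' hkk' => Finset.disjoint_coe.2 (disjoint_edgesInto (by omega)))
    (fun k => measurableSet_existsEdgeInto n (n + k + 1))
  rw [setOf_forall_graphOrderRel_eq_iInter]
  refine tendsto_nhds_unique h_lim ?_
  have h_factor (k : ℕ) :
      μ (existsEdgeInto n (n + k + 1)) = ENNReal.ofReal (1 - (1 - p) ^ (k + 1)) := by
    rw [hμ.measure_existsEdgeInto hn, show n + k + 1 - n = k + 1 by omega]
  have h_nonneg (k : ℕ) : 0 ≤ 1 - (1 - p) ^ (k + 1) :=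
    sub_nonneg.2 (pow_le_one₀ (by linarith [hp.2]) (by linarith [hp.1]))
  simp_rw [h_factor, ← ENNReal.ofReal_prod_of_nonneg fun k _ => h_nonneg k]
  exact (ENNReal.continuous_ofReal.tendsto _).comp
    (tendsto_eulerLam (abs_lt.2 ⟨by linarith [hp.2], by linarith [hp.1]⟩))
end

section
/- For all 0<q<1 and all integers n≥2, (λ_{n−1}(q) − q^n)·S_n(q) < q^n, where S_n(q) = Σ_{k=1}^{∞} q^{nk}/λ_k(q). -/
/-- The tail product `μ_n(q) = ∏_{i=n}^∞ (1 - q^i)`. -/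
noncomputable def eulerMu (q : ℝ) (n : ℕ) : ℝ := ∏' i : ℕ, (1 - q ^ (n + i))

/-- The offset `b_n(q) = Σ_{k=1}^n λ_{k-1}(q) λ_{n-k}(q) - n κ(q)²`, the expected number of
posts in a random graph order on `n` elements minus `n κ(q)²`. -/
noncomputable def postOffset (q : ℝ) (n : ℕ) : ℝ :=
  (∑ k ∈ Finset.Icc 1 n, eulerLam q (k - 1) * eulerLam q (n - k)) - n * eulerKappa q ^ 2

/-!
Write `h_k = q^{nk}/λ_k` (`sTerm q n k`), so that `S_n = Σ_{k≥1} h_k` and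
`Σ_{k≥0} h_k = 1 + S_n`. Since `λ_{k+1} = λ_k (1 - q^{k+1})`, we have
`(1 - q^{k+1}) h_{k+1} = q^n h_k`. For `m ≥ 1` the product `λ_m` is at most
`λ_1 = 1 - q ≤ 1 - q^{k+1}`, strictly less for `k ≥ 1`, hence `λ_m h_{k+1} ≤ q^n h_k` with
strict inequality at `k = 1`. Summing over `k` gives `λ_m S_n < q^n (1 + S_n)`, i.e.
`(λ_m - q^n) S_n < q^n`; take `m = n - 1`.
-/

open Filter Topology

noncomputable def sTerm (q : ℝ) (n k : ℕ) : ℝ := q ^ (n * k) / eulerLam q k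

section

variable {q : ℝ}

lemma eulerLam_zero (q : ℝ) : eulerLam q 0 = 1 := Finset.prod_range_zero _

lemma eulerLam_succ (q : ℝ) (k : ℕ) : eulerLam q (k + 1) = eulerLam q k * (1 - q ^ (k + 1)) :=
  Finset.prod_range_succ _ _

lemma one_sub_pow_succ_pos (hq0 : 0 ≤ q) (hq1 : q < 1) (k : ℕ) : 0 < 1 - q ^ (k + 1) :=
  sub_pos.2 (pow_lt_one₀ hq0 hq1 k.succ_ne_zero)

lemma eulerLam_pos (hq0 : 0 ≤ q) (hq1 : q < 1) (k : ℕ) : 0 < eulerLam q k :=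
  Finset.prod_pos fun i _ ↦ one_sub_pow_succ_pos hq0 hq1 i

lemma eulerLam_antitone (hq0 : 0 ≤ q) (hq1 : q < 1) : Antitone (eulerLam q) :=
  antitone_nat_of_succ_le fun k ↦ by
    rw [eulerLam_succ]
    exact mul_le_of_le_one_right (eulerLam_pos hq0 hq1 k).le
      (sub_le_self _ (pow_nonneg hq0 _))

lemma eulerLam_le_one_sub (hq0 : 0 ≤ q) (hq1 : q < 1) {m : ℕ} (hm : 1 ≤ m) :
    eulerLam q m ≤ 1 - q := by
  simpa [eulerLam_succ, eulerLam_zero] using eulerLam_antitone hq0 hq1 hm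

lemma eulerLam_le_one_sub_pow (hq0 : 0 ≤ q) (hq1 : q < 1) {m : ℕ} (hm : 1 ≤ m) (k : ℕ) :
    eulerLam q m ≤ 1 - q ^ (k + 1) :=
  (eulerLam_le_one_sub hq0 hq1 hm).trans
    (sub_le_sub_left (pow_le_of_le_one hq0 hq1.le k.succ_ne_zero) 1)

lemma eulerLam_lt_one_sub_pow (hq0 : 0 < q) (hq1 : q < 1) {m : ℕ} (hm : 1 ≤ m) {k : ℕ}
    (hk : 1 ≤ k) : eulerLam q m < 1 - q ^ (k + 1) :=
  (eulerLam_le_one_sub hq0.le hq1 hm).trans_lt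
    (sub_lt_sub_left (pow_lt_self_of_lt_one₀ hq0 hq1 (by omega)) 1)

lemma sTerm_zero (q : ℝ) (n : ℕ) : sTerm q n 0 = 1 := by
  rw [sTerm, eulerLam_zero, mul_zero, pow_zero, div_one]

lemma sTerm_succ (q : ℝ) (n k : ℕ) :
    sTerm q n (k + 1) = q ^ n / (1 - q ^ (k + 1)) * sTerm q n k := by
  rw [sTerm, sTerm, eulerLam_succ, div_mul_div_comm, mul_comm (1 - _), Nat.mul_succ, pow_add,
    mul_comm (q ^ n)]

lemma sTerm_nonneg (hq0 : 0 ≤ q) (hq1 : q < 1) (n k : ℕ) : 0 ≤ sTerm q n k :=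
  div_nonneg (pow_nonneg hq0 _) (eulerLam_pos hq0 hq1 k).le

lemma sTerm_pos (hq0 : 0 < q) (hq1 : q < 1) (n k : ℕ) : 0 < sTerm q n k :=
  div_pos (pow_pos hq0 _) (eulerLam_pos hq0.le hq1 k)

lemma one_sub_pow_mul_sTerm_succ (hq0 : 0 ≤ q) (hq1 : q < 1) (n k : ℕ) :
    (1 - q ^ (k + 1)) * sTerm q n (k + 1) = q ^ n * sTerm q n k := by
  rw [sTerm_succ, ← mul_assoc, mul_div_cancel₀ _ (one_sub_pow_succ_pos hq0 hq1 k).ne']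

lemma summable_sTerm (hq0 : 0 ≤ q) (hq1 : q < 1) {n : ℕ} (hn : n ≠ 0) :
    Summable (sTerm q n) := by
  obtain ⟨r, hr, hr1⟩ := exists_between (pow_lt_one₀ hq0 hq1 hn)
  have hratio : Tendsto (fun k : ℕ ↦ q ^ n / (1 - q ^ (k + 1))) atTop (𝓝 (q ^ n)) := by
    have hpow : Tendsto (fun k : ℕ ↦ q ^ (k + 1)) atTop (𝓝 0) :=
      (tendsto_pow_atTop_nhds_zero_of_lt_one hq0 hq1).comp (tendsto_add_atTop_nat 1)
    simpa [div_eq_mul_inv] using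
      ((tendsto_const_nhds (x := (1 : ℝ))).sub hpow |>.inv₀ (by norm_num)).const_mul (q ^ n)
  refine summable_of_ratio_norm_eventually_le hr1 ?_
  filter_upwards [hratio.eventually_le_const hr] with k hk
  rw [Real.norm_of_nonneg (sTerm_nonneg hq0 hq1 n _),
    Real.norm_of_nonneg (sTerm_nonneg hq0 hq1 n _), sTerm_succ]
  exact mul_le_mul_of_nonneg_right hk (sTerm_nonneg hq0 hq1 n k)

theorem eulerLam_mul_tsum_sTerm_succ_lt (hq0 : 0 < q) (hq1 : q < 1) {m n : ℕ} (hm : 1 ≤ m)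
    (hn : n ≠ 0) :
    eulerLam q m * ∑' k, sTerm q n (k + 1) < q ^ n * ∑' k, sTerm q n k := by
  have hS := summable_sTerm hq0.le hq1 hn
  rw [← tsum_mul_left, ← tsum_mul_left]
  refine Summable.tsum_lt_tsum (i := 1) (fun k ↦ ?_) ?_
    (((summable_nat_add_iff 1).2 hS).mul_left _) (hS.mul_left _)
  · rw [← one_sub_pow_mul_sTerm_succ hq0.le hq1]
    exact mul_le_mul_of_nonneg_right (eulerLam_le_one_sub_pow hq0.le hq1 hm k)
      (sTerm_nonneg hq0.le hq1 n _)
  · rw [← one_sub_pow_mul_sTerm_succ hq0.le hq1]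
    exact mul_lt_mul_of_pos_right (eulerLam_lt_one_sub_pow hq0 hq1 hm le_rfl)
      (sTerm_pos hq0 hq1 n _)

end

/-- For all `0 < q < 1` and all integers `n ≥ 2`,
`(λ_{n-1}(q) - q^n) · S_n(q) < q^n`, where `S_n(q) = Σ_{k=1}^∞ q^{nk}/λ_k(q)`. -/
theorem lam_sub_pow_mul_S_lt (q : ℝ) (hq0 : 0 < q) (hq1 : q < 1) (n : ℕ) (hn : 2 ≤ n) :
    (eulerLam q (n - 1) - q ^ n) * (∑' k : ℕ, q ^ (n * (k + 1)) / eulerLam q (k + 1)) < q ^ n := by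
  have hlt := eulerLam_mul_tsum_sTerm_succ_lt hq0 hq1 (m := n - 1) (n := n) (by omega) (by omega)
  rw [(summable_sTerm hq0.le hq1 (by omega)).tsum_eq_zero_add, sTerm_zero] at hlt
  change _ * ∑' k, sTerm q n (k + 1) < _
  linear_combination hlt
end
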